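/- arXiv:2102.07727 — 4 statements merged into one kernel-verified Lean document; each statement's English description precedes it below -/
import Mathlib

section
/- An index k ∈ supp(v) lies in the essential support esupp(v) if and only if there exists an invariant monomial ∏_{j∈supp(v)} x_j^{c_j} with nonnegative integer exponents such that c_k > 0. -/
open scoped BigOperators

noncomputable section

/-- Action of the torus `(ℂˣ)^d` on `ℂ^n` given by the integer weight matrix `M`:
coordinate `j` is scaled by the Laurent monomial `∏ i, (t i) ^ (M i j)`. -/
def torusAct {d n : ℕ} (M : Matrix (Fin d) (Fin n) ℤ) (t : Fin d → ℂˣ) (v : Fin n → ℂ) :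
    Fin n → ℂ := fun j => (∏ i, (t i : ℂ) ^ M i j) * v j

/-- The orbit of `v` under the torus action. -/
def torusOrbit {d n : ℕ} (M : Matrix (Fin d) (Fin n) ℤ) (v : Fin n → ℂ) : Set (Fin n → ℂ) :=
  {w | ∃ t : Fin d → ℂˣ, w = torusAct M t v}

/-- The Newton cone `C(v)`: the convex cone generated by the columns `m⁽ʲ⁾` of `M`
for `j` in the support of `v`. -/
def newtonCone {d n : ℕ} (M : Matrix (Fin d) (Fin n) ℤ) (v : Fin n → ℂ) : Set (Fin d → ℝ) :=
  {y | ∃ c : Fin n → ℝ, (∀ j, 0 ≤ c j) ∧ (∀ j, v j = 0 → c j = 0) ∧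
    y = ∑ j, c j • (fun i => (M i j : ℝ))}

/-- The lineality space `L(v) = C(v) ∩ (-C(v))` of the Newton cone. -/
def lineality {d n : ℕ} (M : Matrix (Fin d) (Fin n) ℤ) (v : Fin n → ℂ) : Set (Fin d → ℝ) :=
  newtonCone M v ∩ -newtonCone M v

/-- The essential support: indices `j` in the support of `v` whose weight column
lies in the lineality space of the Newton cone. -/
def esupp {d n : ℕ} (M : Matrix (Fin d) (Fin n) ℤ) (v : Fin n → ℂ) : Set (Fin n) :=
  {j | v j ≠ 0 ∧ (fun i => (M i j : ℝ)) ∈ lineality M v}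


/-!
Invariance of `x^c` means `∑ⱼ cⱼ m⁽ʲ⁾ = 0`, and `m⁽ᵏ⁾ ∈ L(v)` amounts to `-m⁽ᵏ⁾ ∈ C(v)`, i.e. to a
real relation `∑ⱼ xⱼ m⁽ʲ⁾ = 0` with `x ≥ 0` supported on `supp v` and `xₖ > 0`. So the point is
that a nonnegative real relation among integer vectors can be replaced by a natural one with the
same support. By induction on the support: the vectors on the support are dependent over `ℝ`,
hence over `ℤ`; moving `x` along an integer relation `g` until a coordinate vanishes shrinks the
support, and `N • c' + g` with `N` large restores it.
-/

open Finset

theorem prod_zpow_eq_zpow_sum {G ι : Type*} [CommGroup G] (s : Finset ι) (f : ι → ℤ) (a : G) :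
    ∏ i ∈ s, a ^ f i = a ^ ∑ i ∈ s, f i := by
  classical
  induction s using Finset.induction_on with
  | empty => simp
  | insert i s hi ih => rw [prod_insert hi, sum_insert hi, ih, zpow_add]

section TorusInvariance

variable {d n : ℕ} (M : Matrix (Fin d) (Fin n) ℤ)

theorem prod_torusAct_pow (t : Fin d → ℂˣ) (u : Fin n → ℂ) (c : Fin n → ℕ) :
    ∏ j, torusAct M t u j ^ c j =
      ((∏ i, t i ^ ∑ j, (c j : ℤ) * M i j : ℂˣ) : ℂ) * ∏ j, u j ^ c j := by
  simp only [torusAct, mul_pow, prod_mul_distrib]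
  congr 1
  simp only [← prod_zpow_eq_zpow_sum, Units.coe_prod, Units.val_zpow_eq_zpow_val]
  rw [prod_comm]
  refine prod_congr rfl fun j _ => ?_
  rw [← prod_pow]
  exact prod_congr rfl fun i _ => by rw [mul_comm, zpow_mul, zpow_natCast]

theorem prod_torusAct_pow_invariant_iff (c : Fin n → ℕ) :
    (∀ (t : Fin d → ℂˣ) (u : Fin n → ℂ), ∏ j, torusAct M t u j ^ c j = ∏ j, u j ^ c j) ↔
      ∑ j, (c j : ℤ) • (fun i => M i j) = 0 := by
  simp only [prod_torusAct_pow]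
  constructor
  · intro h
    funext i
    have h2 := h (Pi.mulSingle i (Units.mk0 2 two_ne_zero)) 1
    simp only [Pi.one_apply, one_pow, prod_const_one, mul_one, Units.val_eq_one] at h2
    rw [prod_eq_single i (fun i' _ hi' => by simp [hi']) (by simp), Pi.mulSingle_eq_same] at h2
    have h3 : (2 : ℝ) ^ ∑ j, (c j : ℤ) * M i j = 1 := by
      simpa [Units.val_zpow_eq_zpow_val, norm_zpow] using congrArg (fun u : ℂˣ => ‖(u : ℂ)‖) h2
    simpa [Finset.sum_apply] using (zpow_eq_one_iff_right₀ zero_le_two (by norm_num)).1 h3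
  · intro h t u
    have h' : ∀ i, ∑ j, (c j : ℤ) * M i j = 0 := fun i => by
      simpa [Finset.sum_apply] using congrFun h i
    simp [h']

end TorusInvariance

section IntegerRelations

variable {ι κ K : Type*} [Fintype ι]

theorem sum_intCast_smul_eq_zero [Ring K] (w : ι → κ → ℤ) {g : ι → ℤ}
    (h : ∑ i, g i • w i = 0) : ∑ i, (g i : K) • (fun r => (w i r : K)) = 0 := by
  funext r
  simpa [Finset.sum_apply] using congr(($h r : K))

theorem exists_int_relation_of_relation [Finite κ] [Field K] [CharZero K] (w : ι → κ → ℤ)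
    {x : ι → K} (hx : x ≠ 0) (hrel : ∑ i, x i • (fun r => (w i r : K)) = 0) :
    ∃ g : ι → ℤ, (∃ i, 0 < g i) ∧ (∀ i, x i = 0 → g i = 0) ∧ ∑ i, g i • w i = 0 := by
  classical
  set S := univ.filter (fun i => x i ≠ 0)
  have hK : ¬LinearIndepOn K (fun i r => (w i r : K)) (S : Set ι) := by
    rw [not_linearIndepOn_finset_iff]
    refine ⟨x, ?_, ?_⟩
    · rwa [sum_filter_of_ne fun i _ hi => left_ne_zero_of_smul hi]
    · obtain ⟨i, hi⟩ := Function.ne_iff.mp hx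
      exact ⟨i, by simpa [S] using hi, hi⟩
  have hZ : ¬LinearIndepOn ℤ w (S : Set ι) := fun h => by
    have := (linearIndependent_algebraMap_comp_iff (R := ℤ) (S := K) (v := fun i : S => w i)).mpr h
    exact hK (by simpa [LinearIndepOn, Function.comp_def] using this)
  obtain ⟨f, hf, i, hiS, hfi⟩ := not_linearIndepOn_finset_iff.mp hZ
  set g : ι → ℤ := fun i => if x i ≠ 0 then f i else 0
  have hg : ∑ i, g i • w i = 0 := by
    rw [← hf, sum_filter]
    exact sum_congr rfl fun i _ => by simp only [g]; split_ifs <;> simp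
  have hsupp : ∀ i, x i = 0 → g i = 0 := fun i hi => if_neg (not_not.mpr hi)
  have hgi : g i ≠ 0 := by simpa [g, (mem_filter.mp hiS).2] using hfi
  rcases hgi.lt_or_gt with hneg | hpos
  · exact ⟨-g, ⟨i, neg_pos.mpr hneg⟩, fun j hj => by simp [hsupp j hj],
      by simp only [Pi.neg_apply, neg_smul, sum_neg_distrib, hg, neg_zero]⟩
  · exact ⟨g, ⟨i, hpos⟩, hsupp, hg⟩

theorem exists_maximal_sub_smul_nonneg [Field K] [LinearOrder K] [IsStrictOrderedRing K]
    {x g : ι → K} (hx : 0 ≤ x) (hg : ∃ i, 0 < g i) :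
    ∃ τ : K, 0 ≤ τ ∧ 0 ≤ x - τ • g ∧ ∃ i, 0 < g i ∧ x i = τ * g i := by
  classical
  obtain ⟨i₀, hi₀, hmin⟩ := exists_min_image (univ.filter (fun i => 0 < g i)) (fun i => x i / g i)
    (by simpa [Finset.Nonempty] using hg)
  have hgi₀ : 0 < g i₀ := (mem_filter.mp hi₀).2
  refine ⟨x i₀ / g i₀, div_nonneg (hx i₀) hgi₀.le, fun i => ?_, i₀, hgi₀, ?_⟩
  · simp only [Pi.zero_apply, Pi.sub_apply, Pi.smul_apply, smul_eq_mul, sub_nonneg]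
    rcases lt_or_ge 0 (g i) with hgi | hgi
    · exact (le_div_iff₀ hgi).mp (hmin i (mem_filter.mpr ⟨mem_univ i, hgi⟩))
    · exact (mul_nonpos_of_nonneg_of_nonpos (div_nonneg (hx i₀) hgi₀.le) hgi).trans (hx i)
  · exact (div_mul_cancel₀ _ hgi₀.ne').symm

theorem exists_nat_eq_mul_add (c : ι → ℕ) (g : ι → ℤ) (hg : ∀ i, c i = 0 → 0 ≤ g i) :
    ∃ (N : ℤ) (c' : ι → ℕ), (∀ i, (c' i : ℤ) = N * c i + g i) ∧ ∀ i, c i ≠ 0 → c' i ≠ 0 := by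
  set N : ℤ := ∑ i, |g i| + 1
  have hN : ∀ i, |g i| < N := fun i =>
    Int.lt_add_one_iff.mpr (single_le_sum (fun j _ => abs_nonneg (g j)) (mem_univ i))
  have hpos : ∀ i, c i ≠ 0 → 0 < N * c i + g i := fun i hi => by
    have : N ≤ N * c i :=
      le_mul_of_one_le_right (by linarith [abs_nonneg (g i), hN i]) (by omega)
    linarith [neg_abs_le (g i), hN i]
  have hnonneg : ∀ i, 0 ≤ N * c i + g i := fun i => by
    by_cases hi : c i = 0
    · simpa [hi] using hg i hi
    · exact (hpos i hi).le
  exact ⟨N, fun i => (N * c i + g i).toNat, fun i => Int.toNat_of_nonneg (hnonneg i),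
    fun i hi => by simpa using hpos i hi⟩

theorem exists_nat_relation_of_nonneg_relation [Finite κ] [Field K] [LinearOrder K]
    [IsStrictOrderedRing K] (w : ι → κ → ℤ) {x : ι → K} (hx : 0 ≤ x)
    (hrel : ∑ i, x i • (fun r => (w i r : K)) = 0) :
    ∃ c : ι → ℕ, (∀ i, c i = 0 ↔ x i = 0) ∧ ∑ i, (c i : ℤ) • w i = 0 := by
  classical
  induction hn : #(univ.filter fun i => x i ≠ 0) using Nat.strong_induction_on generalizing x
    with | _ n ih =>
  by_cases hx0 : x = 0
  · exact ⟨0, fun i => by simp [hx0], by simp⟩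
  obtain ⟨g, hgpos, hgx, hg⟩ := exists_int_relation_of_relation w hx0 hrel
  obtain ⟨τ, hτ, hx', i₀, hgi₀, hxi₀⟩ :=
    exists_maximal_sub_smul_nonneg hx (g := fun i => (g i : K)) (by exact_mod_cast hgpos)
  set x' := x - τ • fun i => (g i : K)
  have hx'x : ∀ i, x i = 0 → x' i = 0 := fun i hi => by simp [x', hi, hgx i hi]
  have hrel' : ∑ i, x' i • (fun r => (w i r : K)) = 0 := by
    simp only [x', Pi.sub_apply, Pi.smul_apply, smul_eq_mul, sub_smul, sum_sub_distrib, mul_smul,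
      ← smul_sum, hrel, sum_intCast_smul_eq_zero w hg, smul_zero, sub_zero]
  have hlt : #(univ.filter fun i => x' i ≠ 0) < n := by
    rw [← hn]
    refine card_lt_card ((ssubset_iff_of_subset ?_).mpr ⟨i₀, ?_, ?_⟩)
    · intro i; simpa using mt (hx'x i)
    · simpa using fun h => (hgi₀.ne' (by exact_mod_cast hgx i₀ h))
    · simp [x', hxi₀]
  obtain ⟨c', hc'x', hc'⟩ := ih _ hlt hx' hrel' rfl
  have hgpos' : ∀ i, x i ≠ 0 → x' i = 0 → 0 < g i := fun i hxi hx'i => by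
    have : x i = τ * g i := by simpa [x', sub_eq_zero] using hx'i
    have : (0 : K) < g i := pos_of_mul_pos_right (this ▸ (hx i).lt_of_ne' hxi) hτ
    exact_mod_cast this
  obtain ⟨N, c, hc, hcc'⟩ := exists_nat_eq_mul_add c' g fun i hi => by
    by_cases hxi : x i = 0
    · exact (hgx i hxi).ge
    · exact (hgpos' i hxi ((hc'x' i).mp hi)).le
  refine ⟨c, fun i => ⟨fun hci => ?_, fun hxi => ?_⟩, ?_⟩
  · by_contra hxi
    by_cases hx'i : x' i = 0
    · have : 0 = g i := by simpa [hci, (hc'x' i).mpr hx'i] using hc i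
      exact (hgpos' i hxi hx'i).ne this
    · exact hcc' i (mt (hc'x' i).mp hx'i) hci
  · have : (c i : ℤ) = 0 := by simpa [(hc'x' i).mpr (hx'x i hxi), hgx i hxi] using hc i
    exact_mod_cast this
  · simp only [hc, add_smul, mul_smul, sum_add_distrib, ← smul_sum, hc', hg, smul_zero, add_zero]

end IntegerRelations

section NewtonCone

variable {d n : ℕ} (M : Matrix (Fin d) (Fin n) ℤ) {v : Fin n → ℂ} {k : Fin n}

theorem col_mem_newtonCone (hk : v k ≠ 0) : (fun i => (M i k : ℝ)) ∈ newtonCone M v := by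
  refine ⟨Pi.single k 1, fun j => ?_,
    fun j hj => Pi.single_eq_of_ne (ne_of_apply_ne v (hj ▸ hk.symm)) _, ?_⟩
  · by_cases h : j = k <;> simp [h]
  · simp [Pi.single_apply]

theorem neg_col_mem_newtonCone_iff (hk : v k ≠ 0) :
    -(fun i => (M i k : ℝ)) ∈ newtonCone M v ↔
      ∃ c : Fin n → ℕ, (∀ j, v j = 0 → c j = 0) ∧
        ∑ j, (c j : ℤ) • (fun i => M i j) = 0 ∧ 0 < c k := by
  constructor
  · rintro ⟨a, ha, hav, heq⟩
    have hx : 0 ≤ a + Pi.single k (1 : ℝ) := add_nonneg ha (Pi.single_nonneg.mpr zero_le_one)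
    have hrel : ∑ j, (a + Pi.single k (1 : ℝ) : Fin n → ℝ) j • (fun i => (M i j : ℝ)) = 0 := by
      simp [add_smul, sum_add_distrib, ← heq, Pi.single_apply]
    obtain ⟨c, hcx, hc⟩ := exists_nat_relation_of_nonneg_relation (fun j i => M i j) hx hrel
    refine ⟨c, fun j hj => (hcx j).mpr ?_, hc, Nat.pos_of_ne_zero fun h => ?_⟩
    · simp [hav j hj, Pi.single_eq_of_ne (ne_of_apply_ne v (hj ▸ hk.symm))]
    · have : a k + 1 = 0 := by simpa using (hcx k).mp h
      linarith [ha k]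
  · rintro ⟨c, hcv, hrel, hck⟩
    have hrelℝ : ∑ j, (c j : ℝ) • (fun i => (M i j : ℝ)) = 0 := by
      simpa using sum_intCast_smul_eq_zero (K := ℝ) _ hrel
    refine ⟨fun j => (c j : ℝ) / c k - (Pi.single k 1 : Fin n → ℝ) j, fun j => ?_,
      fun j hj => ?_, ?_⟩
    · by_cases h : j = k
      · simp [h, hck.ne']
      · simp only [Pi.single_eq_of_ne h, sub_zero]
        positivity
    · simp [hcv j hj, Pi.single_eq_of_ne (ne_of_apply_ne v (hj ▸ hk.symm))]
    · simp [sub_smul, sum_sub_distrib, div_eq_inv_mul, mul_smul, ← smul_sum, hrelℝ, Pi.single_apply]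

end NewtonCone

/-- `k ∈ supp v` lies in the essential support of `v` iff there exists an invariant monomial
`∏_{j ∈ supp v} x_j ^ c_j` with nonnegative integer exponents and `c_k > 0`. -/
theorem mem_esupp_iff_invariant_monomial {d n : ℕ} (M : Matrix (Fin d) (Fin n) ℤ)
    (v : Fin n → ℂ) (k : Fin n) (hk : v k ≠ 0) :
    k ∈ esupp M v ↔
      ∃ c : Fin n → ℕ, (∀ j, v j = 0 → c j = 0) ∧
        (∀ (t : Fin d → ℂˣ) (u : Fin n → ℂ),
          ∏ j, (torusAct M t u j) ^ c j = ∏ j, (u j) ^ c j) ∧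
        0 < c k := by
  simp only [prod_torusAct_pow_invariant_iff, ← neg_col_mem_newtonCone_iff M hk]
  exact ⟨fun h => Set.mem_neg.mp h.2.2, fun h => ⟨hk, col_mem_newtonCone M hk, Set.mem_neg.mpr h⟩⟩
end
end

section
/- A vector v is in the null cone of the torus action (i.e., 0 ∈ closure(O_v)) if and only if esupp(v) = ∅, equivalently if and only if the Newton cone C(v) is pointed and m^{(j)} ≠ 0 for all j ∈ supp(v). -/
open scoped BigOperators

noncomputable section

/-!
A nontrivial relation `∑ⱼ cⱼ m⁽ʲ⁾ = 0` with `c ≥ 0` supported on `supp v` makes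
`w ↦ ∏ⱼ ‖wⱼ‖ ^ cⱼ` a continuous torus invariant that vanishes at `0` but not at `v`, so `0` is not
in the orbit closure. Without such a relation, `0` is not in the convex hull of the weights of
`supp v`; Hahn–Banach gives `θ` with `⟨m⁽ʲ⁾, θ⟩ < 0` on `supp v`, and the one-parameter subgroup
`s ↦ (exp (s θᵢ))ᵢ` drives `v` to `0`. Finally, `j ∈ esupp v` exactly when some such relation has
`cⱼ ≠ 0`, which also identifies `esupp v = ∅` with pointedness of `C(v)` plus `m⁽ʲ⁾ ≠ 0`.
-/

theorem norm_prod_zpow {ι 𝕜 : Type*} [Fintype ι] [NormedField 𝕜] (t : ι → 𝕜ˣ) (m : ι → ℤ) :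
    ‖∏ i, (t i : 𝕜) ^ m i‖ = Real.exp (∑ i, m i * Real.log ‖(t i : 𝕜)‖) := by
  rw [Real.exp_sum, norm_prod]
  refine Finset.prod_congr rfl fun i _ => ?_
  rw [norm_zpow, ← Real.log_zpow, Real.exp_log (zpow_pos (norm_pos_iff.2 (t i).ne_zero) _)]

theorem exists_strongDual_neg_of_relation_eq_zero {ι E : Type*} [Fintype ι] [AddCommGroup E]
    [Module ℝ E] [TopologicalSpace E] [IsTopologicalAddGroup E] [ContinuousSMul ℝ E]
    [LocallyConvexSpace ℝ E] [T2Space E] (w : ι → E) (s : Set ι)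
    (h : ∀ c : ι → ℝ, 0 ≤ c → (∀ i ∉ s, c i = 0) → Fintype.linearCombination ℝ w c = 0 → c = 0) :
    ∃ f : StrongDual ℝ E, ∀ i ∈ s, f (w i) < 0 := by
  classical
  set L := Fintype.linearCombination ℝ w
  set Z : Set (ι → ℝ) := {c | ∀ i ∉ s, c i = 0}
  have hZ_closed : IsClosed Z := by
    simp only [Z, Set.ofPred_forall]
    exact isClosed_iInter fun i =>
      isClosed_iInter fun _ => isClosed_eq (continuous_apply i) continuous_const
  have hZ_convex : Convex ℝ Z := fun x hx y hy a b _ _ _ i hi => by simp [hx i hi, hy i hi]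
  -- `T` is the convex hull of the vectors `w i`, `i ∈ s`
  set T := L '' (stdSimplex ℝ ι ∩ Z)
  have hT_compact : IsCompact T :=
    ((isCompact_stdSimplex ℝ ι).inter_right hZ_closed).image L.continuous_of_finiteDimensional
  have hT_convex : Convex ℝ T := ((convex_stdSimplex ℝ ι).inter hZ_convex).linear_image L
  have h0 : (0 : E) ∉ T := by
    rintro ⟨c, ⟨hc, hcZ⟩, hc0⟩
    simpa [h c hc.1 hcZ hc0] using hc.2
  obtain ⟨f, u, u', hfu, huu', hu'⟩ := geometric_hahn_banach_compact_closed hT_convex hT_compact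
    (convex_singleton 0) isClosed_singleton (Set.disjoint_singleton_right.2 h0)
  refine ⟨f, fun i hi => ?_⟩
  have hwi : w i ∈ T := ⟨Pi.single i 1,
    ⟨single_mem_stdSimplex ℝ i, fun k hk => Pi.single_eq_of_ne (by rintro rfl; exact hk hi) _⟩,
      by simp [L, Fintype.linearCombination_apply_single]⟩
  linarith [hfu _ hwi, hu' 0 rfl, map_zero f]

section NullCone

variable {d n : ℕ} (M : Matrix (Fin d) (Fin n) ℤ) (v : Fin n → ℂ)

abbrev weight (j : Fin n) : Fin d → ℝ := fun i => (M i j : ℝ)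

abbrev weightMap : (Fin n → ℝ) →ₗ[ℝ] (Fin d → ℝ) := Fintype.linearCombination ℝ (weight M)

def coeffCone : Set (Fin n → ℝ) := {c | 0 ≤ c ∧ ∀ j, v j = 0 → c j = 0}

variable {M v}

theorem mem_newtonCone {y : Fin d → ℝ} :
    y ∈ newtonCone M v ↔ ∃ c ∈ coeffCone v, weightMap M c = y := by
  constructor
  · rintro ⟨c, hc0, hcs, rfl⟩
    exact ⟨c, ⟨hc0, hcs⟩, Fintype.linearCombination_apply _ _ _⟩
  · rintro ⟨c, ⟨hc0, hcs⟩, rfl⟩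
    exact ⟨c, hc0, hcs, Fintype.linearCombination_apply _ _ _⟩

theorem add_mem_coeffCone {c c' : Fin n → ℝ} (hc : c ∈ coeffCone v) (hc' : c' ∈ coeffCone v) :
    c + c' ∈ coeffCone v :=
  ⟨add_nonneg hc.1 hc'.1, fun j hj => by simp [hc.2 j hj, hc'.2 j hj]⟩

theorem single_mem_coeffCone {j : Fin n} (hj : v j ≠ 0) : Pi.single j 1 ∈ coeffCone v :=
  ⟨Pi.single_nonneg.2 zero_le_one, fun _ hk => Pi.single_eq_of_ne (by rintro rfl; exact hj hk) _⟩

theorem weight_mem_newtonCone {j : Fin n} (hj : v j ≠ 0) : weight M j ∈ newtonCone M v :=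
  mem_newtonCone.2 ⟨_, single_mem_coeffCone hj, by simp [Fintype.linearCombination_apply_single]⟩

theorem zero_mem_lineality : (0 : Fin d → ℝ) ∈ lineality M v := by
  have h0 : (0 : Fin d → ℝ) ∈ newtonCone M v :=
    mem_newtonCone.2 ⟨0, ⟨le_rfl, fun _ _ => rfl⟩, map_zero _⟩
  exact ⟨h0, by rwa [Set.mem_neg, neg_zero]⟩

theorem mem_esupp_of_relation {c : Fin n → ℝ} (hc : c ∈ coeffCone v) (hrel : weightMap M c = 0)
    {j : Fin n} (hj : c j ≠ 0) : j ∈ esupp M v := by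
  have hvj : v j ≠ 0 := fun h => hj (hc.2 j h)
  have hpos : 0 < c j := lt_of_le_of_ne (hc.1 j) (Ne.symm hj)
  refine ⟨hvj, weight_mem_newtonCone hvj, ?_⟩
  -- `-m⁽ʲ⁾ = (c j)⁻¹ • ∑ₖ c k • m⁽ᵏ⁾ - m⁽ʲ⁾`, and these coefficients vanish at `j`
  refine mem_newtonCone.2 ⟨(c j)⁻¹ • c - Pi.single j 1, ⟨fun k => ?_, fun k hk => ?_⟩, ?_⟩
  · rcases eq_or_ne k j with rfl | hkj
    · simp [hj]
    · simpa [Pi.single_eq_of_ne hkj] using mul_nonneg (inv_nonneg.2 hpos.le) (hc.1 k)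
  · have hkj : k ≠ j := by rintro rfl; exact hvj hk
    simp [hc.2 k hk, Pi.single_eq_of_ne hkj]
  · simp [hrel, Fintype.linearCombination_apply_single]

theorem exists_relation_of_mem_esupp {j : Fin n} (hj : j ∈ esupp M v) :
    ∃ c ∈ coeffCone v, c j ≠ 0 ∧ weightMap M c = 0 := by
  obtain ⟨hvj, -, hneg⟩ := hj
  obtain ⟨c, hc, hcj⟩ := mem_newtonCone.1 hneg
  refine ⟨c + Pi.single j 1, add_mem_coeffCone hc (single_mem_coeffCone hvj), ?_, ?_⟩
  · simpa using (add_pos_of_nonneg_of_pos (hc.1 j) one_pos).ne'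
  · simp [hcj, Fintype.linearCombination_apply_single]

theorem esupp_eq_empty_iff_forall_relation :
    esupp M v = ∅ ↔ ∀ c ∈ coeffCone v, weightMap M c = 0 → c = 0 := by
  constructor
  · intro h c hc hrel
    by_contra hne
    obtain ⟨j, hj⟩ := Function.ne_iff.1 hne
    simpa [h] using mem_esupp_of_relation hc hrel hj
  · intro h
    refine Set.eq_empty_of_forall_notMem fun j hj => ?_
    obtain ⟨c, hc, hcj, hrel⟩ := exists_relation_of_mem_esupp hj
    simp [h c hc hrel] at hcj

theorem esupp_eq_empty_iff_lineality_eq_zero :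
    esupp M v = ∅ ↔ lineality M v = {0} ∧ ∀ j, v j ≠ 0 → weight M j ≠ 0 := by
  constructor
  · intro h
    refine ⟨Set.eq_singleton_iff_unique_mem.2 ⟨zero_mem_lineality, fun y hy => ?_⟩,
      fun j hvj hw => ?_⟩
    · obtain ⟨c, hc, rfl⟩ := mem_newtonCone.1 hy.1
      obtain ⟨c', hc', hc'y⟩ := mem_newtonCone.1 hy.2
      have hsum : c + c' = 0 := esupp_eq_empty_iff_forall_relation.1 h _
        (add_mem_coeffCone hc hc') (by rw [map_add, hc'y, add_neg_cancel])
      rw [((add_eq_zero_iff_of_nonneg hc.1 hc'.1).1 hsum).1, map_zero]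
    · have hj : j ∈ esupp M v := ⟨hvj, show weight M j ∈ _ from hw ▸ zero_mem_lineality⟩
      simp [h] at hj
  · rintro ⟨hL, hw⟩
    refine Set.eq_empty_of_forall_notMem fun j ⟨hvj, hj⟩ => hw j hvj ?_
    rwa [hL] at hj

theorem prod_norm_rpow_torusAct {c : Fin n → ℝ} (hrel : weightMap M c = 0) (t : Fin d → ℂˣ) :
    ∏ j, ‖torusAct M t v j‖ ^ c j = ∏ j, ‖v j‖ ^ c j := by
  set ℓ : Fin d → ℝ := fun i => Real.log ‖(t i : ℂ)‖
  have hfactor : ∀ j, ‖torusAct M t v j‖ ^ c j =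
      Real.exp (c j * (weight M j ⬝ᵥ ℓ)) * ‖v j‖ ^ c j := by
    intro j
    rw [torusAct, norm_mul, Real.mul_rpow (norm_nonneg _) (norm_nonneg _), norm_prod_zpow,
      ← Real.exp_mul, mul_comm (c j)]
    rfl
  have hexponent : ∑ j, c j * (weight M j ⬝ᵥ ℓ) = 0 := by
    simp_rw [← smul_eq_mul, ← smul_dotProduct, ← sum_dotProduct, ← Fintype.linearCombination_apply,
      hrel, zero_dotProduct]
  rw [Finset.prod_congr rfl fun j _ => hfactor j, Finset.prod_mul_distrib, ← Real.exp_sum,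
    hexponent, Real.exp_zero, one_mul]

theorem relation_eq_zero_of_zero_mem_closure (h0 : (0 : Fin n → ℂ) ∈ closure (torusOrbit M v))
    {c : Fin n → ℝ} (hc : c ∈ coeffCone v) (hrel : weightMap M c = 0) : c = 0 := by
  by_contra hne
  obtain ⟨j₀, hj₀⟩ := Function.ne_iff.1 hne
  set F : (Fin n → ℂ) → ℝ := fun w => ∏ j, ‖w j‖ ^ c j
  have hF : Continuous F :=
    continuous_finsetProd _ fun j _ => (continuous_apply j).norm.rpow_const fun _ => .inr (hc.1 j)
  have hinv : Set.EqOn F (fun _ => F v) (torusOrbit M v) := by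
    rintro _ ⟨t, rfl⟩
    exact prod_norm_rpow_torusAct hrel t
  have hF0 : F 0 = 0 := Finset.prod_eq_zero (Finset.mem_univ j₀) (by simp [Real.zero_rpow hj₀])
  have hFv : F v ≠ 0 := by
    refine Finset.prod_ne_zero_iff.2 fun j _ => ?_
    by_cases hvj : v j = 0
    · simp [hc.2 j hvj]
    · exact (Real.rpow_pos_of_pos (norm_pos_iff.2 hvj) _).ne'
  exact hFv (hF0 ▸ (hinv.closure hF continuous_const h0).symm)

theorem zero_mem_closure_torusOrbit_of_dotProduct_neg (θ : Fin d → ℝ)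
    (hθ : ∀ j, v j ≠ 0 → weight M j ⬝ᵥ θ < 0) : (0 : Fin n → ℂ) ∈ closure (torusOrbit M v) := by
  set t : ℝ → Fin d → ℂˣ := fun s i => Units.mk0 (Complex.exp (s * θ i : ℝ)) (Complex.exp_ne_zero _)
  refine mem_closure_of_tendsto (b := Filter.atTop) (f := fun s => torusAct M (t s) v) ?_
    (.of_forall fun s => ⟨t s, rfl⟩)
  refine tendsto_pi_nhds.2 fun j => tendsto_zero_iff_norm_tendsto_zero.2 ?_
  have hnorm : ∀ s : ℝ, ‖torusAct M (t s) v j‖ = Real.exp (s * (weight M j ⬝ᵥ θ)) * ‖v j‖ := by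
    intro s
    rw [torusAct, norm_mul, norm_prod_zpow]
    congr 2
    simp only [t, Units.val_mk0, Complex.norm_exp_ofReal, Real.log_exp, dotProduct, Finset.mul_sum]
    exact Finset.sum_congr rfl fun i _ => by ring
  simp_rw [hnorm]
  by_cases hvj : v j = 0
  · simp [hvj]
  · simpa using ((Real.tendsto_exp_atBot.comp
      (Filter.tendsto_id.atTop_mul_const_of_neg (hθ j hvj))).mul_const ‖v j‖)

theorem zero_mem_closure_torusOrbit_of_forall_relation
    (h : ∀ c ∈ coeffCone v, weightMap M c = 0 → c = 0) :
    (0 : Fin n → ℂ) ∈ closure (torusOrbit M v) := by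
  obtain ⟨f, hf⟩ := exists_strongDual_neg_of_relation_eq_zero (weight M) {j | v j ≠ 0}
    fun c hc0 hcs hrel => h c ⟨hc0, fun j hj => hcs j (not_not.2 hj)⟩ hrel
  refine zero_mem_closure_torusOrbit_of_dotProduct_neg (fun i => f (Pi.single i 1)) fun j hj => ?_
  convert hf j hj using 1
  conv_rhs => rw [pi_eq_sum_univ' (weight M j)]
  simp [map_sum, dotProduct]

end NullCone

/-- `v` is in the null cone (i.e. `0 ∈ closure (O_v)`) iff `esupp v = ∅`, equivalently iff the
Newton cone `C(v)` is pointed and `m⁽ʲ⁾ ≠ 0` for all `j ∈ supp v`. -/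
theorem mem_null_cone_iff {d n : ℕ} (M : Matrix (Fin d) (Fin n) ℤ) (v : Fin n → ℂ) :
    ((0 : Fin n → ℂ) ∈ closure (torusOrbit M v) ↔ esupp M v = ∅) ∧
    ((0 : Fin n → ℂ) ∈ closure (torusOrbit M v) ↔
      (lineality M v = {0} ∧ ∀ j, v j ≠ 0 → (fun i => (M i j : ℝ)) ≠ 0)) := by
  have hnull : (0 : Fin n → ℂ) ∈ closure (torusOrbit M v) ↔ esupp M v = ∅ := by
    rw [esupp_eq_empty_iff_forall_relation]
    exact ⟨fun h0 _ => relation_eq_zero_of_zero_mem_closure h0,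
      zero_mem_closure_torusOrbit_of_forall_relation⟩
  exact ⟨hnull, hnull.trans esupp_eq_empty_iff_lineality_eq_zero⟩
end
end

section
/- Suppose supp(v) = supp(w) = S for two vectors v, w under a torus action. Then O_v ≠ O_w if and only if there exists an invariant Laurent monomial f = ∏_{j∈S} x_j^{c_j} (with c ∈ ℤ^S, ∑_j c_j m^{(j)} = 0) such that f(v) ≠ f(w). -/
open scoped BigOperators

noncomputable section

open Finset
open scoped Matrix

/-! As `v` and `w` have the same support `S`, the orbits agree iff the ratio `u = w / v ∈ (ℂˣ)^S`
is a value `(∏ᵢ tᵢ ^ M i j)_{j ∈ S}` of the weight characters. Dually: the homomorphism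
`c ↦ u ^ c` on `ℤ^S` should factor through `c ↦ ∑ⱼ cⱼ m⁽ʲ⁾ : ℤ^S → ℤ^d`, and it does iff it kills
the kernel, i.e. iff `u ^ c = 1` (equivalently `v ^ c = w ^ c`) for every invariant Laurent
monomial `x ^ c`. The factorisation exists because `ℂˣ` is divisible, hence an injective
`ℤ`-module. -/

theorem IsAlgClosed.exists_units_zpow_eq {K : Type*} [Field K] [IsAlgClosed K] {m : ℤ}
    (hm : m ≠ 0) (z : Kˣ) : ∃ x : Kˣ, x ^ m = z := by
  have hk : 0 < m.natAbs := Int.natAbs_pos.mpr hm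
  have exists_pow_natAbs_eq (y : Kˣ) : ∃ x : Kˣ, x ^ m.natAbs = y := by
    obtain ⟨x, hx⟩ := IsAlgClosed.exists_pow_nat_eq (y : K) hk
    have hx0 : x ≠ 0 := by
      rintro rfl
      exact y.ne_zero (by rw [← hx, zero_pow hk.ne'])
    exact ⟨Units.mk0 x hx0, Units.ext (by simpa using hx)⟩
  rcases Int.natAbs_eq m with h | h
  · obtain ⟨x, hx⟩ := exists_pow_natAbs_eq z
    exact ⟨x, by rw [h, zpow_natCast, hx]⟩
  · obtain ⟨x, hx⟩ := exists_pow_natAbs_eq z⁻¹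
    exact ⟨x, by rw [h, zpow_neg, zpow_natCast, hx, inv_inv]⟩

instance IsAlgClosed.divisibleByAdditiveUnits {K : Type*} [Field K] [IsAlgClosed K] :
    DivisibleBy (Additive Kˣ) ℤ :=
  divisibleByOfSMulRightSurj _ _ fun hm a => by
    obtain ⟨x, hx⟩ := IsAlgClosed.exists_units_zpow_eq hm a.toMul
    exact ⟨Additive.ofMul x, congrArg Additive.ofMul hx⟩

theorem AddMonoidHom.exists_comp_eq_of_ker_le {A B D : Type*} [AddCommGroup A] [AddCommGroup B]
    [AddCommGroup D] [DivisibleBy D ℤ] (f : A →+ B) (φ : A →+ D) (h : f.ker ≤ φ.ker) :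
    ∃ g : B →+ D, g.comp f = φ := by
  obtain ⟨g, hg⟩ := (Module.Baer.of_divisible D).extension_property_addMonoidHom
    (QuotientAddGroup.kerLift f) (QuotientAddGroup.kerLift_injective f)
    (QuotientAddGroup.lift f.ker φ h)
  refine ⟨g, AddMonoidHom.ext fun a => ?_⟩
  simpa using DFunLike.congr_fun hg (a : A ⧸ f.ker)

section LaurentMonomial

variable {G ι κ : Type*} [CommGroup G] [Fintype ι] [Fintype κ]

def laurentMonomialHom (u : ι → G) : (ι → ℤ) →+ Additive G where
  toFun c := Additive.ofMul (∏ j, u j ^ c j)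
  map_zero' := by simp
  map_add' c c' := by simp [zpow_add, prod_mul_distrib]

@[simp]
lemma laurentMonomialHom_apply (u : ι → G) (c : ι → ℤ) :
    laurentMonomialHom u c = Additive.ofMul (∏ j, u j ^ c j) := rfl

lemma laurentMonomialHom_single [DecidableEq ι] (u : ι → G) (j : ι) :
    laurentMonomialHom u (Pi.single j 1) = Additive.ofMul (u j) := by
  simp [Pi.single_apply]

lemma AddMonoidHom.eq_laurentMonomialHom [DecidableEq κ] (g : (κ → ℤ) →+ Additive G) :
    g = laurentMonomialHom fun i => (g (Pi.single i 1)).toMul := by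
  ext i
  simp

def weightChar (M : Matrix κ ι ℤ) (t : κ → G) (j : ι) : G := ∏ i, t i ^ M i j

lemma laurentMonomialHom_weightChar (M : Matrix κ ι ℤ) (t : κ → G) :
    laurentMonomialHom (weightChar M t) =
      (laurentMonomialHom t).comp Mᵀ.vecMulLinear.toAddMonoidHom := by
  classical
  ext j
  simp [weightChar]

lemma prod_weightChar_zpow (M : Matrix κ ι ℤ) (t : κ → G) (c : ι → ℤ) :
    ∏ j, weightChar M t j ^ c j = ∏ i, t i ^ ∑ j, c j * M i j :=
  Additive.ofMul.injective (DFunLike.congr_fun (laurentMonomialHom_weightChar M t) c)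

theorem exists_weightChar_eq_iff [DivisibleBy (Additive G) ℤ] (M : Matrix κ ι ℤ) (S : Set ι)
    (u : ι → G) :
    (∃ t : κ → G, ∀ j ∈ S, weightChar M t j = u j) ↔
      ∀ c : ι → ℤ, (∀ j ∉ S, c j = 0) → (∀ i, ∑ j, c j * M i j = 0) → ∏ j, u j ^ c j = 1 := by
  classical
  constructor
  · rintro ⟨t, ht⟩ c hcS hcM
    have hu : ∏ j, u j ^ c j = ∏ j, weightChar M t j ^ c j := by
      refine prod_congr rfl fun j _ => ?_
      by_cases hj : j ∈ S
      · rw [ht j hj]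
      · simp [hcS j hj]
    simp [hu, prod_weightChar_zpow, hcM]
  · intro hu
    -- the exponent lattice `ℤ^S`, as the vectors vanishing off `S`
    let L : AddSubgroup (ι → ℤ) := AddSubgroup.pi Sᶜ fun _ => ⊥
    obtain ⟨g, hg⟩ := AddMonoidHom.exists_comp_eq_of_ker_le
      (Mᵀ.vecMulLinear.toAddMonoidHom.comp L.subtype) ((laurentMonomialHom u).comp L.subtype)
      (by
        rintro ⟨c, hcS⟩ hcM
        rw [AddMonoidHom.mem_ker] at hcM ⊢
        exact congrArg Additive.ofMul <| hu c
          (fun j hj => by simpa using (AddSubgroup.mem_pi _).1 hcS j hj) (congrFun hcM))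
    refine ⟨fun i => (g (Pi.single i 1)).toMul, fun j hj => ?_⟩
    have hjL : Pi.single j 1 ∈ L := (AddSubgroup.mem_pi _).2 fun i hi => by
      simp [show i ≠ j from fun h => hi (h ▸ hj)]
    apply Additive.ofMul.injective
    calc Additive.ofMul (weightChar M _ j)
        = laurentMonomialHom (weightChar M _) (Pi.single j 1) :=
          (laurentMonomialHom_single _ j).symm
      _ = laurentMonomialHom _ (Pi.single j 1 ᵥ* Mᵀ) :=
          DFunLike.congr_fun (laurentMonomialHom_weightChar M _) _
      _ = g (Pi.single j 1 ᵥ* Mᵀ) := (DFunLike.congr_fun g.eq_laurentMonomialHom _).symm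
      _ = laurentMonomialHom u (Pi.single j 1) := DFunLike.congr_fun hg ⟨_, hjL⟩
      _ = Additive.ofMul (u j) := laurentMonomialHom_single u j

end LaurentMonomial

section TorusAction

variable {d n : ℕ} (M : Matrix (Fin d) (Fin n) ℤ)

lemma torusAct_apply (t : Fin d → ℂˣ) (v : Fin n → ℂ) (j : Fin n) :
    torusAct M t v j = weightChar M t j * v j := by
  simp [torusAct, weightChar]

lemma torusAct_one (v : Fin n → ℂ) : torusAct M 1 v = v := by
  funext j
  simp [torusAct]

lemma torusAct_mul (t s : Fin d → ℂˣ) (v : Fin n → ℂ) :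
    torusAct M t (torusAct M s v) = torusAct M (t * s) v := by
  funext j
  simp only [torusAct, Pi.mul_apply, Units.val_mul, mul_zpow, prod_mul_distrib]
  ring

lemma torusOrbit_eq_iff_mem {v w : Fin n → ℂ} :
    torusOrbit M v = torusOrbit M w ↔ w ∈ torusOrbit M v := by
  refine ⟨fun h => h ▸ ⟨1, (torusAct_one M w).symm⟩, ?_⟩
  rintro ⟨t, rfl⟩
  ext x
  constructor
  · rintro ⟨s, rfl⟩
    exact ⟨s * t⁻¹, by rw [torusAct_mul, inv_mul_cancel_right]⟩
  · rintro ⟨s, rfl⟩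
    exact ⟨s * t, by rw [torusAct_mul]⟩

open Classical in
def unitOrOne {K : Type*} [GroupWithZero K] (z : K) : Kˣ :=
  if h : z = 0 then 1 else Units.mk0 z h

lemma val_unitOrOne {K : Type*} [GroupWithZero K] {z : K} (hz : z ≠ 0) :
    (unitOrOne z : K) = z := by
  simp [unitOrOne, hz]

variable {M} {S : Set (Fin n)}

lemma prod_zpow_eq_val_prod_unitOrOne {v : Fin n → ℂ} (hv : {j | v j ≠ 0} = S) {c : Fin n → ℤ}
    (hc : ∀ j, j ∉ S → c j = 0) : ∏ j, v j ^ c j = ↑(∏ j, unitOrOne (v j) ^ c j) := by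
  push_cast
  refine prod_congr rfl fun j _ => ?_
  by_cases hj : j ∈ S
  · rw [val_unitOrOne ((Set.ext_iff.1 hv j).2 hj)]
  · simp [hc j hj]

lemma mem_torusOrbit_iff {v w : Fin n → ℂ} (hv : {j | v j ≠ 0} = S) (hw : {j | w j ≠ 0} = S) :
    w ∈ torusOrbit M v ↔
      ∃ t : Fin d → ℂˣ, ∀ j ∈ S, weightChar M t j = unitOrOne (w j) / unitOrOne (v j) := by
  simp only [torusOrbit, Set.mem_ofPred_eq, funext_iff, torusAct_apply]
  refine exists_congr fun t => forall_congr' fun j => ?_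
  have hvS : v j ≠ 0 ↔ j ∈ S := Set.ext_iff.1 hv j
  have hwS : w j ≠ 0 ↔ j ∈ S := Set.ext_iff.1 hw j
  by_cases hj : j ∈ S
  · have hvj : v j ≠ 0 := hvS.2 hj
    have hwj : w j ≠ 0 := hwS.2 hj
    rw [eq_div_iff_mul_eq', Units.ext_iff, Units.val_mul, val_unitOrOne hvj, val_unitOrOne hwj,
      eq_comm]
    simp [hj]
  · have hvj : v j = 0 := not_not.1 (mt hvS.1 hj)
    have hwj : w j = 0 := not_not.1 (mt hwS.1 hj)
    simp [hj, hvj, hwj]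

end TorusAction

/-- If `supp v = supp w = S`, then `O_v ≠ O_w` iff there is an invariant Laurent monomial
`∏_{j ∈ S} x_j ^ c j` (so `c` is supported on `S` and `∑_j c_j • m⁽ʲ⁾ = 0`) taking different
values at `v` and `w`. -/
theorem orbit_ne_iff_separating_laurent_monomial {d n : ℕ} (M : Matrix (Fin d) (Fin n) ℤ)
    (v w : Fin n → ℂ) (S : Set (Fin n))
    (hv : {j | v j ≠ 0} = S) (hw : {j | w j ≠ 0} = S) :
    torusOrbit M v ≠ torusOrbit M w ↔
      ∃ c : Fin n → ℤ, (∀ j, j ∉ S → c j = 0) ∧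
        (∀ i, ∑ j, c j * M i j = 0) ∧
        ∏ j, (v j) ^ c j ≠ ∏ j, (w j) ^ c j := by
  rw [Ne, torusOrbit_eq_iff_mem, mem_torusOrbit_iff hv hw, exists_weightChar_eq_iff]
  push Not
  refine exists_congr fun c => and_congr_right fun hcS => and_congr_right fun _ => not_congr ?_
  rw [prod_zpow_eq_val_prod_unitOrOne hv hcS, prod_zpow_eq_val_prod_unitOrOne hw hcS,
    Units.val_inj]
  simp_rw [div_zpow]
  rw [prod_div_distrib, div_eq_one, eq_comm]
end
end

section
/- If a Laurent monomial f = x^e (with e ∈ ℤ^S, possibly negative exponents, supported on S = esupp(v) = esupp(w)) is T-invariant and separates v and w, and moreover for each k ∈ S with e_k < 0 one fixes an invariant monomial m_k = x^{c^{(k)}} with nonnegative exponents and c^{(k)}_k > 0 satisfying m_k(v) = m_k(w), then f̃ := f · ∏_{k: e_k<0} m_k^{−e_k} is an invariant monomial with all exponents nonnegative that also separates v and w. -/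
open scoped BigOperators

noncomputable section

/-!
Write `a k = max (-e k) 0` and `b = ∑ₖ a k • c k ∈ ℕⁿ` (`clearingExponent e c`), so the new
exponent is `e + b`. Each negative entry `e k` is cancelled by the summand `a k • c k`, because
`c k k ≥ 1`, and `b` is invariant as a combination of invariant exponents. Since `b` is a natural
exponent vanishing off the common support of `v` and `w`, evaluation splits as
`x^(e + b) = x^e · ∏ₖ m_k(x)^(a k)`, with the second factor a nonzero quantity taking the same
value at `v` and `w`.
-/

lemma Finset.prod_zpow_add_natCast {ι G₀ : Type*} [CommGroupWithZero G₀] (s : Finset ι)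
    (x : ι → G₀) (a : ι → ℤ) (b : ι → ℕ) (hx : ∀ j ∈ s, x j = 0 → b j = 0) :
    ∏ j ∈ s, x j ^ (a j + (b j : ℤ)) = (∏ j ∈ s, x j ^ a j) * ∏ j ∈ s, x j ^ b j := by
  rw [← Finset.prod_mul_distrib]
  refine Finset.prod_congr rfl fun j hj => ?_
  by_cases hxj : x j = 0
  · simp [hx j hj hxj]
  · rw [zpow_add₀ hxj, zpow_natCast]

section ClearingDenominators

variable {ι : Type*} [Fintype ι]

def clearingExponent (e : ι → ℤ) (c : ι → ι → ℕ) (j : ι) : ℕ :=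
  ∑ k, (-e k).toNat * c k j

lemma sum_ite_neg_mul_eq_clearingExponent (e : ι → ℤ) (c : ι → ι → ℕ) (j : ι) :
    ∑ k, (if e k < 0 then (-(e k)) * (c k j : ℤ) else 0) = clearingExponent e c j := by
  push_cast [clearingExponent]
  refine Finset.sum_congr rfl fun k _ => ?_
  split_ifs with hk
  · rw [Int.toNat_of_nonneg (by omega)]
  · rw [Int.toNat_eq_zero.mpr (by omega), Nat.cast_zero, zero_mul]

lemma add_clearingExponent_nonneg {e : ι → ℤ} {c : ι → ι → ℕ} (hc : ∀ k, e k < 0 → 0 < c k k)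
    (j : ι) : 0 ≤ e j + clearingExponent e c j := by
  rcases lt_or_ge (e j) 0 with hj | hj
  · have hdiag : (-e j).toNat * c j j ≤ clearingExponent e c j :=
      Finset.single_le_sum (f := fun k => (-e k).toNat * c k j) (fun _ _ => Nat.zero_le _)
        (Finset.mem_univ j)
    have : (-e j).toNat ≤ (-e j).toNat * c j j := Nat.le_mul_of_pos_right _ (hc j hj)
    omega
  · positivity

lemma sum_add_clearingExponent_mul_eq_zero {e : ι → ℤ} {c : ι → ι → ℕ} {m : ι → ℤ}
    (he : ∑ j, e j * m j = 0) (hc : ∀ k, e k < 0 → ∑ j, (c k j : ℤ) * m j = 0) :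
    ∑ j, (e j + clearingExponent e c j) * m j = 0 := by
  have hterm : ∀ k, ((-e k).toNat : ℤ) * ∑ j, (c k j : ℤ) * m j = 0 := fun k => by
    rcases lt_or_ge (e k) 0 with hk | hk
    · rw [hc k hk, mul_zero]
    · rw [Int.toNat_eq_zero.mpr (by omega), Nat.cast_zero, zero_mul]
  simp only [add_mul, Finset.sum_add_distrib, he, zero_add, clearingExponent, Nat.cast_sum,
    Nat.cast_mul, Finset.sum_mul, mul_assoc]
  rw [Finset.sum_comm]
  simp only [← Finset.mul_sum, hterm, Finset.sum_const_zero]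

lemma clearingExponent_eq_zero {e : ι → ℤ} {c : ι → ι → ℕ} {j : ι}
    (hc : ∀ k, e k < 0 → c k j = 0) : clearingExponent e c j = 0 :=
  Finset.sum_eq_zero fun k _ => by
    rcases lt_or_ge (e k) 0 with hk | hk
    · rw [hc k hk, mul_zero]
    · rw [Int.toNat_eq_zero.mpr (by omega), zero_mul]

lemma prod_pow_clearingExponent {M : Type*} [CommMonoid M] (x : ι → M) (e : ι → ℤ)
    (c : ι → ι → ℕ) :
    ∏ j, x j ^ clearingExponent e c j = ∏ k, (∏ j, x j ^ c k j) ^ (-e k).toNat := by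
  simp only [clearingExponent, ← Finset.prod_pow_eq_pow_sum, ← Finset.prod_pow, ← pow_mul,
    mul_comm (-e _).toNat]
  exact Finset.prod_comm

end ClearingDenominators

theorem clearing_denominators_separating_monomial_general {d n : ℕ}
    (M : Matrix (Fin d) (Fin n) ℤ) (v w : Fin n → ℂ)
    (hsupp : ∀ j, v j ≠ 0 ↔ w j ≠ 0)
    (e : Fin n → ℤ)
    (heinv : ∀ i, ∑ j, e j * M i j = 0)
    (hsep : ∏ j, (v j) ^ e j ≠ ∏ j, (w j) ^ e j)
    (c : Fin n → Fin n → ℕ)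
    (hc : ∀ k, e k < 0 →
      (∀ j, v j = 0 → c k j = 0) ∧
      (∀ i, ∑ j, (c k j : ℤ) * M i j = 0) ∧
      0 < c k k ∧
      ∏ j, (v j) ^ c k j = ∏ j, (w j) ^ c k j) :
    (∀ j, 0 ≤ e j + ∑ k, (if e k < 0 then (-(e k)) * (c k j : ℤ) else 0)) ∧
    (∀ i, ∑ j, (e j + ∑ k, (if e k < 0 then (-(e k)) * (c k j : ℤ) else 0)) * M i j = 0) ∧
    ∏ j, (v j) ^ (e j + ∑ k, (if e k < 0 then (-(e k)) * (c k j : ℤ) else 0)) ≠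
      ∏ j, (w j) ^ (e j + ∑ k, (if e k < 0 then (-(e k)) * (c k j : ℤ) else 0)) := by
  simp only [sum_ite_neg_mul_eq_clearingExponent]
  have hv : ∀ j, v j = 0 → clearingExponent e c j = 0 := fun j hj =>
    clearingExponent_eq_zero fun k hk => (hc k hk).1 j hj
  have hw : ∀ j, w j = 0 → clearingExponent e c j = 0 := fun j hj =>
    hv j (not_not.mp fun hvj => (hsupp j).mp hvj hj)
  refine ⟨add_clearingExponent_nonneg fun k hk => (hc k hk).2.2.1,
    fun i => sum_add_clearingExponent_mul_eq_zero (heinv i) fun k hk => (hc k hk).2.1 i, ?_⟩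
  have hfactor : ∏ j, v j ^ clearingExponent e c j = ∏ j, w j ^ clearingExponent e c j := by
    simp only [prod_pow_clearingExponent]
    refine Finset.prod_congr rfl fun k _ => ?_
    rcases lt_or_ge (e k) 0 with hk | hk
    · rw [(hc k hk).2.2.2]
    · rw [Int.toNat_eq_zero.mpr (by omega), pow_zero, pow_zero]
  have hfactor_ne : ∏ j, v j ^ clearingExponent e c j ≠ 0 :=
    Finset.prod_ne_zero_iff.mpr fun j _ => by
      rw [Ne, pow_eq_zero_iff']
      exact fun h => h.2 (hv j h.1)
  rw [Finset.prod_zpow_add_natCast _ _ _ _ fun j _ => hv j,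
    Finset.prod_zpow_add_natCast _ _ _ _ fun j _ => hw j, hfactor]
  exact fun h => hsep (mul_right_cancel₀ (hfactor ▸ hfactor_ne) h)

/-- Clearing denominators of a separating invariant Laurent monomial: if `f = x^e` is an
invariant Laurent monomial supported on `S = esupp v = esupp w` separating `v` and `w`
(where `supp v = supp w`), and for each `k` with `e k < 0` one fixes an invariant monomial
`m_k = x^{c k}` with nonnegative exponents (supported on `supp v`), `c k k > 0`, and
`m_k(v) = m_k(w)`, then `f̃ = f · ∏_{k : e k < 0} m_k ^ (-(e k))` is an invariant monomial
with all exponents nonnegative that still separates `v` and `w`. -/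
theorem clearing_denominators_separating_monomial {d n : ℕ}
    (M : Matrix (Fin d) (Fin n) ℤ) (v w : Fin n → ℂ)
    (hsupp : ∀ j, v j ≠ 0 ↔ w j ≠ 0)
    (S : Set (Fin n)) (hSv : S = esupp M v) (hSw : S = esupp M w)
    (e : Fin n → ℤ) (he0 : ∀ j, j ∉ S → e j = 0)
    (heinv : ∀ i, ∑ j, e j * M i j = 0)
    (hsep : ∏ j, (v j) ^ e j ≠ ∏ j, (w j) ^ e j)
    (c : Fin n → Fin n → ℕ)
    (hc : ∀ k, e k < 0 →
      (∀ j, v j = 0 → c k j = 0) ∧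
      (∀ i, ∑ j, (c k j : ℤ) * M i j = 0) ∧
      0 < c k k ∧
      ∏ j, (v j) ^ c k j = ∏ j, (w j) ^ c k j) :
    (∀ j, 0 ≤ e j + ∑ k, (if e k < 0 then (-(e k)) * (c k j : ℤ) else 0)) ∧
    (∀ i, ∑ j, (e j + ∑ k, (if e k < 0 then (-(e k)) * (c k j : ℤ) else 0)) * M i j = 0) ∧
    ∏ j, (v j) ^ (e j + ∑ k, (if e k < 0 then (-(e k)) * (c k j : ℤ) else 0)) ≠
      ∏ j, (w j) ^ (e j + ∑ k, (if e k < 0 then (-(e k)) * (c k j : ℤ) else 0)) :=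
  clearing_denominators_separating_monomial_general M v w hsupp e heinv hsep c hc
end
end
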